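/- Let G = (V,E) be a finite simple graph with V nonempty, and let v : E → ℝ be real edge weights satisfying -1 ≤ v_e ≤ 0 for all e ∈ E. Define F : ℝ → ℝ by F(λ) = Σ_{A ⊆ E : (V,A) connected} λ^{|A| - |V| + 1} ∏_{e ∈ A} v_e (a polynomial in λ, since |A| ≥ |V| - 1 for every connected spanning subgraph). Then for every integer ℓ ≥ 0 and every λ with 0 ≤ λ ≤ 1, one has (-1)^{ℓ + |V| - 1} · F^{(ℓ)}(λ) ≥ 0, where F^{(ℓ)} denotes the ℓ-th derivative of F. -/

import Mathlib

/-!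
Write `C(W, B)` for the connected sum of the graph with vertices `W` and edges `B`, and pick an
edge `e = s(x, y)` of `B`. A connected edge set `A ⊆ B` either avoids `e`, or contains `e` with
`A \ e` still connected, or contains `e` as a bridge; in the last case deleting `e` leaves the
component `S` of `x` and its complement `W \ S`, both connected. Hence
`C(W, B) = (1 + v_e λ) C(W, B \ e) + v_e ∑_{x ∈ S, y ∉ S} C(S, B \ e) C(W \ S, B \ e)`.
Call `p` `n`-alternating if `(-1)^(ℓ + n) p^(ℓ) ≥ 0` on `[0, 1]` for every `ℓ`. For
`-1 ≤ a ≤ 0`, since `((1 + a λ) p)^(ℓ) = (1 + a λ) p^(ℓ) + ℓ a p^(ℓ - 1)`, multiplying by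
`1 + a λ` preserves `n`-alternation, and by Leibniz `a p q` is `(m + n + 1)`-alternating when `p`
and `q` are `m`- and `n`-alternating. Induction on `B` shows that `C(W, B)` is
`(|W| - 1)`-alternating.
-/

open Finset SimpleGraph

/-- The number of connected components of the graph on the vertex set `W`
with edge set `A` (isolated vertices count as components). -/
noncomputable def kcomp {V : Type*} [Fintype V] [DecidableEq V]
    (W : Finset V) (A : Finset (Sym2 V)) : ℕ :=
  Nat.card ((SimpleGraph.fromEdgeSet (A : Set (Sym2 V))).induce (W : Set V)).ConnectedComponent

open Polynomial

namespace ConnectedSum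

variable {V : Type*} {W S T : Finset V} {A A' : Finset (Sym2 V)} {e : Sym2 V} {a b x y : V}

abbrev edgeGraph (A : Finset (Sym2 V)) : SimpleGraph V := fromEdgeSet (A : Set (Sym2 V))

theorem edgeGraph_mono (h : A ⊆ A') : edgeGraph A ≤ edgeGraph A' :=
  fromEdgeSet_mono (by exact_mod_cast h)

theorem reachable_of_mem (h : s(a, b) ∈ A) : (edgeGraph A).Reachable a b := by
  by_cases hab : a = b
  · exact hab ▸ Reachable.refl a
  · exact Adj.reachable (by simpa [hab] using h)

def EdgeClosed (A : Finset (Sym2 V)) (S : Set V) : Prop :=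
  ∀ a b, s(a, b) ∈ A → a ∈ S → b ∈ S

theorem EdgeClosed.mem_of_reachable {U : Set V} (hS : EdgeClosed A U)
    (h : (edgeGraph A).Reachable a b) (ha : a ∈ U) : b ∈ U := by
  by_contra hb
  obtain ⟨p⟩ := h
  obtain ⟨d, -, hd, hd'⟩ := p.exists_boundary_dart U ha hb
  exact hd' (hS _ _ ((fromEdgeSet_adj _).1 d.adj).1 hd)

theorem EdgeClosed.mem_iff {U : Set V} (hS : EdgeClosed A U) (h : s(a, b) ∈ A) :
    a ∈ U ↔ b ∈ U :=
  ⟨hS a b h, hS b a (Sym2.eq_swap ▸ h)⟩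

theorem edgeClosed_of_subset_sym2 (hA : A ⊆ W.sym2) : EdgeClosed A W :=
  fun _ _ h _ => (mk_mem_sym2_iff.1 (hA h)).2

theorem disjoint_sym2 (h : Disjoint S T) : Disjoint S.sym2 T.sym2 := by
  refine disjoint_left.2 fun e hS hT => ?_
  induction e using Sym2.ind with
  | h a b => exact disjoint_left.1 h (mk_mem_sym2_iff.1 hS).1 (mk_mem_sym2_iff.1 hT).1

structure IsConnGraph (W : Finset V) (A : Finset (Sym2 V)) : Prop where
  subset_sym2 : A ⊆ W.sym2
  nonempty : W.Nonempty
  reachable : ∀ a ∈ W, ∀ b ∈ W, (edgeGraph A).Reachable a b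

theorem isConnGraph_of_forall_reachable (hA : A ⊆ W.sym2) (hx : x ∈ W)
    (h : ∀ a ∈ W, (edgeGraph A).Reachable a x) : IsConnGraph W A :=
  ⟨hA, ⟨x, hx⟩, fun a ha b hb => (h a ha).trans (h b hb).symm⟩

theorem isConnGraph_empty_iff : IsConnGraph W ∅ ↔ W.card = 1 := by
  rw [card_eq_one]
  constructor
  · rintro ⟨-, ⟨a, ha⟩, h⟩
    refine ⟨a, eq_singleton_iff_unique_mem.2 ⟨ha, fun b hb => ?_⟩⟩
    simpa [edgeGraph, reachable_bot] using h b hb a ha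
  · rintro ⟨a, rfl⟩
    exact isConnGraph_of_forall_reachable (empty_subset _) (mem_singleton_self a)
      fun b hb => by rw [mem_singleton.1 hb]

open scoped Classical in
noncomputable def componentIn (W : Finset V) (A : Finset (Sym2 V)) (x : V) : Finset V :=
  {u ∈ W | (edgeGraph A).Reachable u x}

theorem mem_componentIn : a ∈ componentIn W A x ↔ a ∈ W ∧ (edgeGraph A).Reachable a x := by
  classical exact mem_filter

theorem componentIn_subset : componentIn W A x ⊆ W := fun _ ha => (mem_componentIn.1 ha).1

theorem edgeClosed_componentIn (hA : A ⊆ W.sym2) : EdgeClosed A ↑(componentIn W A x) :=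
  fun a b h ha => by
    rw [mem_coe, mem_componentIn] at ha ⊢
    exact ⟨edgeClosed_of_subset_sym2 hA a b h ha.1, (reachable_of_mem h).symm.trans ha.2⟩

section

open scoped Classical

variable {R : Type*} [CommRing R] (v : Sym2 V → R) {B : Finset (Sym2 V)}

-- On a connected `(W, A)` the exponent does not truncate: it is the cyclomatic number
-- `|A| - |W| + 1`, by `IsConnGraph.card_le_card_add_one`.
noncomputable def connTerm (W : Finset V) (A : Finset (Sym2 V)) : R[X] :=
  monomial (A.card + 1 - W.card) (∏ e ∈ A, v e)

noncomputable def connPoly (W : Finset V) (B : Finset (Sym2 V)) : R[X] :=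
  ∑ A ∈ B.powerset with IsConnGraph W A, connTerm v W A

theorem connPoly_empty : connPoly v W ∅ = if W.card = 1 then 1 else 0 := by
  rw [connPoly, powerset_empty, filter_singleton]
  simp only [isConnGraph_empty_iff]
  split_ifs with h
  · simp [connTerm, h]
  · rfl

end

variable [DecidableEq V]

theorem EdgeClosed.sdiff (hW : EdgeClosed A W) (hS : EdgeClosed A S) :
    EdgeClosed A ↑(W \ S) := fun a b h ha => by
  simp only [coe_sdiff, Set.mem_sdiff, mem_coe] at ha ⊢
  exact ⟨hW a b h ha.1, fun hb => ha.2 ((hS.mem_iff h).2 hb)⟩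

theorem EdgeClosed.reachable_filter (hS : EdgeClosed A S)
    (h : (edgeGraph A).Reachable a b) (ha : a ∈ S) :
    (edgeGraph {e ∈ A | e ∈ S.sym2}).Reachable a b := by
  have hT : EdgeClosed A {u | u ∈ S ∧ (edgeGraph {e ∈ A | e ∈ S.sym2}).Reachable a u} :=
    fun u w huw ⟨hu, hau⟩ => by
      have hw : w ∈ S := hS u w huw hu
      have huw' : s(u, w) ∈ {e ∈ A | e ∈ S.sym2} := mem_filter.2 ⟨huw, mk_mem_sym2_iff.2 ⟨hu, hw⟩⟩
      exact ⟨hw, hau.trans (reachable_of_mem huw')⟩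
  exact (hT.mem_of_reachable h ⟨ha, Reachable.refl a⟩).2

theorem EdgeClosed.filter_union_filter_sdiff (hA : A ⊆ W.sym2)
    (hS : EdgeClosed A S) : {e ∈ A | e ∈ S.sym2} ∪ {e ∈ A | e ∈ (W \ S).sym2} = A := by
  rw [← filter_or]
  refine filter_true_of_mem fun e he => ?_
  induction e using Sym2.ind with
  | h a b =>
    obtain ⟨ha, hb⟩ := mk_mem_sym2_iff.1 (hA he)
    by_cases haS : a ∈ S
    · exact Or.inl (mk_mem_sym2_iff.2 ⟨haS, hS a b he haS⟩)
    · exact Or.inr (mk_mem_sym2_iff.2 ⟨mem_sdiff.2 ⟨ha, haS⟩,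
        mem_sdiff.2 ⟨hb, fun hbS => haS ((hS.mem_iff he).2 hbS)⟩⟩)

theorem reachable_or_reachable_of_insert (h : (edgeGraph (insert s(x, y) A)).Reachable x a) :
    (edgeGraph A).Reachable x a ∨ (edgeGraph A).Reachable y a := by
  have hT : EdgeClosed (insert s(x, y) A)
      {u | (edgeGraph A).Reachable x u ∨ (edgeGraph A).Reachable y u} := by
    intro u w huw hu
    rcases mem_insert.1 huw with huw | huw
    · rcases Sym2.eq_iff.1 huw with ⟨-, rfl⟩ | ⟨-, rfl⟩
      · exact Or.inr (Reachable.refl w)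
      · exact Or.inl (Reachable.refl w)
    · exact hu.imp (·.trans (reachable_of_mem huw)) (·.trans (reachable_of_mem huw))
  exact hT.mem_of_reachable h (Or.inl (Reachable.refl x))

theorem IsConnGraph.insert_of_mem_sym2 (h : IsConnGraph W A) (he : e ∈ W.sym2) :
    IsConnGraph W (insert e A) :=
  ⟨insert_subset he h.subset_sym2, h.nonempty,
    fun a ha b hb => (h.reachable a ha b hb).mono (edgeGraph_mono (subset_insert _ _))⟩

theorem IsConnGraph.insert_union (hS : IsConnGraph S A) (hT : IsConnGraph T A') (hx : x ∈ S)
    (hy : y ∈ T) : IsConnGraph (S ∪ T) (insert s(x, y) (A ∪ A')) := by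
  have hsub : A ∪ A' ⊆ insert s(x, y) (A ∪ A') := subset_insert _ _
  refine isConnGraph_of_forall_reachable (insert_subset
    (mk_mem_sym2_iff.2 ⟨mem_union_left _ hx, mem_union_right _ hy⟩)
    (union_subset (hS.subset_sym2.trans (sym2_mono subset_union_left))
      (hT.subset_sym2.trans (sym2_mono subset_union_right)))) (mem_union_left _ hx) fun a ha => ?_
  rcases mem_union.1 ha with ha | ha
  · exact (hS.reachable a ha x hx).mono (edgeGraph_mono (subset_union_left.trans hsub))
  · exact ((hT.reachable a ha y hy).mono (edgeGraph_mono (subset_union_right.trans hsub))).trans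
      (reachable_of_mem (mem_insert_self _ _)).symm

theorem isConnGraph_filter (hS : EdgeClosed A S) (hx : x ∈ S)
    (h : ∀ a ∈ S, (edgeGraph A).Reachable a x) : IsConnGraph S {e ∈ A | e ∈ S.sym2} :=
  isConnGraph_of_forall_reachable (fun _ he => (mem_filter.1 he).2) hx
    fun a ha => hS.reachable_filter (h a ha) ha

theorem edgeClosed_union (hST : Disjoint S T) (hA : A ⊆ S.sym2) (hA' : A' ⊆ T.sym2) :
    EdgeClosed (A ∪ A') S := fun a b h ha => by
  rcases mem_union.1 h with h | h
  · exact (mk_mem_sym2_iff.1 (hA h)).2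
  · exact absurd (mk_mem_sym2_iff.1 (hA' h)).1 (disjoint_left.1 hST ha)

theorem filter_mem_sym2_union_of_disjoint (hST : Disjoint S T) (hA : A ⊆ S.sym2)
    (hA' : A' ⊆ T.sym2) :
    {e ∈ A ∪ A' | e ∈ S.sym2} = A := by
  rw [filter_union, filter_true_of_mem fun _ he => hA he,
    filter_false_of_mem fun _ he => disjoint_right.1 (disjoint_sym2 hST) (hA' he), union_empty]

theorem componentIn_union (hSW : S ⊆ W) (hx : x ∈ S)
    (hS : IsConnGraph S A) (hA' : A' ⊆ (W \ S).sym2) : componentIn W (A ∪ A') x = S := by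
  ext u
  rw [mem_componentIn]
  refine ⟨fun ⟨hu, hux⟩ => ?_, fun hu =>
    ⟨hSW hu, (hS.reachable u hu x hx).mono (edgeGraph_mono subset_union_left)⟩⟩
  by_contra huS
  have hT : EdgeClosed (A ∪ A') ↑(W \ S) :=
    union_comm A' A ▸ edgeClosed_union sdiff_disjoint hA' hS.subset_sym2
  exact (mem_sdiff.1 (hT.mem_of_reachable hux (mem_sdiff.2 ⟨hu, huS⟩))).2 hx

theorem IsConnGraph.mem_of_insert (h : IsConnGraph W (insert s(x, y) A)) : x ∈ W ∧ y ∈ W :=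
  mk_mem_sym2_iff.1 (h.subset_sym2 (mem_insert_self _ _))

theorem IsConnGraph.subset_sym2_of_insert (h : IsConnGraph W (insert e A)) :
    A ⊆ W.sym2 :=
  (subset_insert _ _).trans h.subset_sym2

theorem IsConnGraph.reachable_or_reachable (h : IsConnGraph W (insert s(x, y) A)) (ha : a ∈ W) :
    (edgeGraph A).Reachable a x ∨ (edgeGraph A).Reachable a y :=
  (reachable_or_reachable_of_insert (h.reachable x h.mem_of_insert.1 a ha)).imp
    Reachable.symm Reachable.symm

theorem IsConnGraph.notMem_componentIn (h : IsConnGraph W (insert s(x, y) A))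
    (hn : ¬IsConnGraph W A) : y ∉ componentIn W A x := fun hy =>
  hn <| isConnGraph_of_forall_reachable h.subset_sym2_of_insert h.mem_of_insert.1 fun _ ha =>
    (h.reachable_or_reachable ha).elim id (·.trans (mem_componentIn.1 hy).2)

theorem IsConnGraph.isConnGraph_componentIn (h : IsConnGraph W (insert s(x, y) A)) :
    IsConnGraph (componentIn W A x) {e ∈ A | e ∈ (componentIn W A x).sym2} :=
  isConnGraph_filter (edgeClosed_componentIn h.subset_sym2_of_insert)
    (mem_componentIn.2 ⟨h.mem_of_insert.1, Reachable.refl x⟩)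
    fun _ ha => (mem_componentIn.1 ha).2

theorem IsConnGraph.isConnGraph_sdiff_componentIn (h : IsConnGraph W (insert s(x, y) A))
    (hn : ¬IsConnGraph W A) :
    IsConnGraph (W \ componentIn W A x) {e ∈ A | e ∈ (W \ componentIn W A x).sym2} := by
  have hA := h.subset_sym2_of_insert
  refine isConnGraph_filter ((edgeClosed_of_subset_sym2 hA).sdiff (edgeClosed_componentIn hA))
    (mem_sdiff.2 ⟨h.mem_of_insert.2, h.notMem_componentIn hn⟩) fun a ha => ?_
  obtain ⟨haW, hax⟩ := mem_sdiff.1 ha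
  exact (h.reachable_or_reachable haW).resolve_left fun hr => hax (mem_componentIn.2 ⟨haW, hr⟩)

theorem IsConnGraph.card_le_card_add_one (h : IsConnGraph W A) : W.card ≤ A.card + 1 := by
  induction A using Finset.strongInduction generalizing W with
  | H A ih =>
    obtain rfl | ⟨e, he⟩ := A.eq_empty_or_nonempty
    · exact (isConnGraph_empty_iff.1 h).le
    induction e using Sym2.ind with
    | h x y =>
    have hlt : A.erase s(x, y) ⊂ A := erase_ssubset he
    have hcard := card_erase_add_one he
    by_cases hc : IsConnGraph W (A.erase s(x, y))
    · have := ih _ hlt hc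
      omega
    rw [← insert_erase he] at h
    have hS := ih _ ((filter_subset _ _).trans_ssubset hlt) h.isConnGraph_componentIn
    have hT := ih _ ((filter_subset _ _).trans_ssubset hlt) (h.isConnGraph_sdiff_componentIn hc)
    set S := componentIn W (A.erase s(x, y)) x
    have hW : (W \ S).card + S.card = W.card := card_sdiff_add_card_eq_card componentIn_subset
    have hdisj : Disjoint {e ∈ A.erase s(x, y) | e ∈ S.sym2}
        {e ∈ A.erase s(x, y) | e ∈ (W \ S).sym2} :=
      (disjoint_sym2 disjoint_sdiff).mono (fun _ he => (mem_filter.1 he).2)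
        fun _ he => (mem_filter.1 he).2
    have hA := card_union_of_disjoint hdisj
    rw [(edgeClosed_componentIn h.subset_sym2_of_insert).filter_union_filter_sdiff
      h.subset_sym2_of_insert] at hA
    omega

section

open scoped Classical

variable {R : Type*} [CommRing R] (v : Sym2 V → R) {B : Finset (Sym2 V)}

theorem connTerm_insert (h : IsConnGraph W A) (he : e ∉ A) :
    connTerm v W (insert e A) = C (v e) * X * connTerm v W A := by
  have := h.card_le_card_add_one
  rw [connTerm, connTerm, card_insert_of_notMem he, prod_insert he, mul_assoc, X_mul_monomial,
    C_mul_monomial]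
  congr 2
  omega

theorem connTerm_insert_union (hSW : S ⊆ W)
    (hS : IsConnGraph S A) (hT : IsConnGraph (W \ S) A') (he : e ∉ A ∪ A') :
    connTerm v W (insert e (A ∪ A')) = C (v e) * (connTerm v S A * connTerm v (W \ S) A') := by
  have h1 := hS.card_le_card_add_one
  have h2 := hT.card_le_card_add_one
  have hW := card_sdiff_add_card_eq_card hSW
  have hdisj : Disjoint A A' := (disjoint_sym2 disjoint_sdiff).mono hS.subset_sym2 hT.subset_sym2
  rw [connTerm, connTerm, connTerm, monomial_mul_monomial, C_mul_monomial, card_insert_of_notMem he,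
    prod_insert he, card_union_of_disjoint hdisj, prod_union hdisj]
  congr 2
  omega

theorem connPoly_insert_of_notMem_sym2 (he : e ∉ W.sym2) :
    connPoly v W (insert e B) = connPoly v W B := by
  unfold connPoly
  congr 1
  ext A
  simp only [mem_filter, mem_powerset]
  exact and_congr_left fun hA => subset_insert_iff_of_notMem fun heA => he (hA.subset_sym2 heA)

-- The bijection sends `A`, which only becomes connected once the bridge `s(x, y)` is added, to the
-- component `S` of `x` in `A` together with the edges of `A` inside `S` and inside `W \ S`.
theorem sum_connTerm_insert_bridge (hxy : s(x, y) ∈ W.sym2) (hB : s(x, y) ∉ B) :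
    ∑ A ∈ B.powerset with ¬IsConnGraph W A ∧ IsConnGraph W (insert s(x, y) A),
        connTerm v W (insert s(x, y) A) =
      ∑ S ∈ W.powerset with x ∈ S ∧ y ∉ S,
        C (v s(x, y)) * (connPoly v S B * connPoly v (W \ S) B) := by
  have hRHS : ∑ S ∈ W.powerset with x ∈ S ∧ y ∉ S,
      C (v s(x, y)) * (connPoly v S B * connPoly v (W \ S) B) =
      ∑ q ∈ (W.powerset.filter fun S => x ∈ S ∧ y ∉ S).sigma fun S =>
          (B.powerset.filter (IsConnGraph S)) ×ˢ (B.powerset.filter (IsConnGraph (W \ S))),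
        C (v s(x, y)) * (connTerm v q.1 q.2.1 * connTerm v (W \ q.1) q.2.2) := by
    rw [sum_sigma]
    refine sum_congr rfl fun S _ => ?_
    rw [connPoly, connPoly, sum_mul_sum, ← sum_product', mul_sum]
  rw [hRHS]
  refine sum_nbij' (fun A => ⟨componentIn W A x, {e ∈ A | e ∈ (componentIn W A x).sym2},
      {e ∈ A | e ∈ (W \ componentIn W A x).sym2}⟩) (fun q => q.2.1 ∪ q.2.2) ?_ ?_ ?_ ?_ ?_
  · intro A hA
    simp only [mem_filter, mem_powerset] at hA
    obtain ⟨hAB, hn, h⟩ := hA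
    simp only [mem_sigma, mem_product, mem_filter, mem_powerset]
    exact ⟨⟨componentIn_subset, mem_componentIn.2 ⟨h.mem_of_insert.1, .refl x⟩,
      h.notMem_componentIn hn⟩, ⟨(filter_subset _ _).trans hAB, h.isConnGraph_componentIn⟩,
      ⟨(filter_subset _ _).trans hAB, h.isConnGraph_sdiff_componentIn hn⟩⟩
  · rintro ⟨S, A, A'⟩ hq
    simp only [mem_sigma, mem_product, mem_filter, mem_powerset] at hq ⊢
    obtain ⟨⟨hSW, hx, hy⟩, ⟨hA, hS⟩, ⟨hA', hT⟩⟩ := hq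
    have hyW := (mk_mem_sym2_iff.1 hxy).2
    refine ⟨union_subset hA hA', fun h => hy ?_, ?_⟩
    · exact (edgeClosed_union disjoint_sdiff hS.subset_sym2 hT.subset_sym2).mem_of_reachable
        (h.reachable x (hSW hx) y hyW) hx
    · simpa only [union_sdiff_of_subset hSW] using
        hS.insert_union hT hx (mem_sdiff.2 ⟨hyW, hy⟩)
  · intro A hA
    simp only [mem_filter, mem_powerset] at hA
    obtain ⟨-, -, h⟩ := hA
    exact (edgeClosed_componentIn h.subset_sym2_of_insert).filter_union_filter_sdiff
      h.subset_sym2_of_insert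
  · rintro ⟨S, A, A'⟩ hq
    simp only [mem_sigma, mem_product, mem_filter, mem_powerset] at hq
    obtain ⟨⟨hSW, hx, -⟩, ⟨-, hS⟩, ⟨-, hT⟩⟩ := hq
    rw [componentIn_union hSW hx hS hT.subset_sym2,
      filter_mem_sym2_union_of_disjoint disjoint_sdiff hS.subset_sym2 hT.subset_sym2, union_comm,
      filter_mem_sym2_union_of_disjoint sdiff_disjoint hT.subset_sym2 hS.subset_sym2]
  · intro A hA
    simp only [mem_filter, mem_powerset] at hA
    obtain ⟨hAB, hn, h⟩ := hA
    have hpart := (edgeClosed_componentIn (x := x) h.subset_sym2_of_insert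
      ).filter_union_filter_sdiff h.subset_sym2_of_insert
    conv_lhs => rw [← hpart]
    exact connTerm_insert_union v componentIn_subset h.isConnGraph_componentIn
      (h.isConnGraph_sdiff_componentIn hn) (by rw [hpart]; exact fun h => hB (hAB h))

theorem connPoly_insert (hxy : s(x, y) ∈ W.sym2) (hB : s(x, y) ∉ B) :
    connPoly v W (insert s(x, y) B) = (1 + C (v s(x, y)) * X) * connPoly v W B +
      ∑ S ∈ W.powerset with x ∈ S ∧ y ∉ S,
        C (v s(x, y)) * (connPoly v S B * connPoly v (W \ S) B) := by
  have hconn : ∑ A ∈ B.powerset with IsConnGraph W A,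
      (if IsConnGraph W (insert s(x, y) A) then connTerm v W (insert s(x, y) A) else 0) =
      C (v s(x, y)) * X * connPoly v W B := by
    rw [connPoly, mul_sum]
    refine sum_congr rfl fun A hA => ?_
    obtain ⟨hAB, hA⟩ := mem_filter.1 hA
    rw [if_pos (hA.insert_of_mem_sym2 hxy), connTerm_insert v hA fun h => hB (mem_powerset.1 hAB h)]
  have hsplit : ∑ A ∈ B.powerset with ¬IsConnGraph W A,
      (if IsConnGraph W (insert s(x, y) A) then connTerm v W (insert s(x, y) A) else 0) =
      ∑ A ∈ B.powerset with ¬IsConnGraph W A ∧ IsConnGraph W (insert s(x, y) A),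
        connTerm v W (insert s(x, y) A) := by
    rw [← sum_filter, filter_filter]
  have hins : connPoly v W (insert s(x, y) B) = connPoly v W B + ∑ A ∈ B.powerset,
      (if IsConnGraph W (insert s(x, y) A) then connTerm v W (insert s(x, y) A) else 0) := by
    rw [connPoly, connPoly, sum_filter, sum_filter, sum_powerset_insert hB]
  rw [hins, ← sum_filter_add_sum_filter_not B.powerset (IsConnGraph W), hconn, hsplit,
    sum_connTerm_insert_bridge v hxy hB]
  ring

end

def AltDerivSign (n : ℕ) (p : ℝ[X]) : Prop :=
  ∀ ℓ : ℕ, ∀ t ∈ Set.Icc (0 : ℝ) 1, 0 ≤ (-1) ^ (ℓ + n) * (derivative^[ℓ] p).eval t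

namespace AltDerivSign

variable {m n : ℕ} {p q : ℝ[X]}

theorem zero : AltDerivSign n 0 := fun ℓ t _ => by simp

theorem one : AltDerivSign 0 1 := fun ℓ t _ => by
  rcases ℓ with _ | ℓ
  · simp
  · simp [iterate_derivative_one]

theorem add (hp : AltDerivSign n p) (hq : AltDerivSign n q) : AltDerivSign n (p + q) :=
  fun ℓ t ht => by
    rw [iterate_map_add, eval_add, mul_add]
    exact add_nonneg (hp ℓ t ht) (hq ℓ t ht)

theorem sum {ι : Type*} {s : Finset ι} {p : ι → ℝ[X]}
    (h : ∀ i ∈ s, AltDerivSign n (p i)) :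
    AltDerivSign n (∑ i ∈ s, p i) := fun ℓ t ht => by
  rw [iterate_derivative_sum, eval_finsetSum, Finset.mul_sum]
  exact Finset.sum_nonneg fun i hi => h i hi ℓ t ht

theorem one_add_C_mul_X_mul {a : ℝ} (hp : AltDerivSign n p) (ha : a ∈ Set.Icc (-1) 0) :
    AltDerivSign n ((1 + C a * X) * p) := by
  intro ℓ t ht
  have hlin : 0 ≤ 1 + a * t := by nlinarith [ha.1, ha.2, ht.1, ht.2]
  rw [show (1 + C a * X) * p = p + C a * (p * X) by ring, iterate_map_add,
    iterate_derivative_C_mul, iterate_derivative_mul_X]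
  simp only [eval_add, eval_mul, eval_C, eval_X, nsmul_eq_mul, eval_natCast]
  rcases ℓ with _ | ℓ
  · refine le_of_le_of_eq (mul_nonneg hlin (hp 0 t ht)) ?_
    simp only [Function.iterate_zero_apply, CharP.cast_eq_zero, zero_mul, add_zero]
    ring
  · have h1 := mul_nonneg hlin (hp (ℓ + 1) t ht)
    have h0 := mul_nonneg (mul_nonneg (by positivity : (0 : ℝ) ≤ ℓ + 1) (neg_nonneg.2 ha.2))
      (hp ℓ t ht)
    rw [Nat.add_sub_cancel, Nat.cast_succ]
    refine le_of_le_of_eq (add_nonneg h1 h0) ?_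
    rw [show ℓ + 1 + n = ℓ + n + 1 by ring, pow_succ]
    ring

theorem C_mul_mul {a : ℝ} (ha : a ≤ 0) (hp : AltDerivSign m p) (hq : AltDerivSign n q) :
    AltDerivSign (m + n + 1) (C a * (p * q)) := by
  intro ℓ t ht
  rw [iterate_derivative_C_mul, iterate_derivative_mul, eval_mul, eval_C, eval_finsetSum,
    Finset.mul_sum, Finset.mul_sum]
  refine Finset.sum_nonneg fun k hk => ?_
  have hkℓ : k ≤ ℓ := Nat.lt_succ_iff.1 (Finset.mem_range.1 hk)
  have hsign : (-1 : ℝ) ^ (ℓ + (m + n + 1)) = -((-1) ^ (ℓ - k + m) * (-1) ^ (k + n)) := by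
    rw [← pow_add, show ℓ + (m + n + 1) = ℓ - k + m + (k + n) + 1 by omega, pow_succ]
    ring
  rw [eval_smul, eval_mul, nsmul_eq_mul, hsign]
  have := mul_nonneg (mul_nonneg (neg_nonneg.2 ha) (Nat.cast_nonneg (ℓ.choose k)))
    (mul_nonneg (hp (ℓ - k) t ht) (hq k t ht))
  linarith

end AltDerivSign

theorem altDerivSign_connPoly {v : Sym2 V → ℝ} {B : Finset (Sym2 V)}
    (hv : ∀ e ∈ B, v e ∈ Set.Icc (-1) 0) (hW : W.Nonempty) :
    AltDerivSign (W.card - 1) (connPoly v W B) := by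
  induction B using Finset.induction_on generalizing W with
  | empty =>
    rw [connPoly_empty]
    split_ifs with h
    · rw [h]
      exact AltDerivSign.one
    · exact AltDerivSign.zero
  | @insert e B heB ih =>
    have ih' {W : Finset V} (hW : W.Nonempty) : AltDerivSign (W.card - 1) (connPoly v W B) :=
      ih (fun f hf => hv f (mem_insert_of_mem hf)) hW
    have hve := hv e (mem_insert_self e B)
    by_cases he : e ∈ W.sym2
    · induction e using Sym2.ind with
      | h x y =>
      rw [connPoly_insert v he heB]
      refine ((ih' hW).one_add_C_mul_X_mul hve).add (AltDerivSign.sum fun S hS => ?_)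
      simp only [mem_filter, mem_powerset] at hS
      obtain ⟨hSW, hx, hy⟩ := hS
      have hyS : y ∈ W \ S := mem_sdiff.2 ⟨(mk_mem_sym2_iff.1 he).2, hy⟩
      have hcard : S.card - 1 + ((W \ S).card - 1) + 1 = W.card - 1 := by
        have := card_sdiff_add_card_eq_card hSW
        have := card_pos.2 ⟨x, hx⟩
        have := card_pos.2 ⟨y, hyS⟩
        omega
      exact hcard ▸ (ih' ⟨x, hx⟩).C_mul_mul hve.2 (ih' ⟨y, hyS⟩)
    · rw [connPoly_insert_of_notMem_sym2 v he]
      exact ih' hW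

end ConnectedSum

theorem Polynomial.iteratedDeriv_eval {𝕜 : Type*} [NontriviallyNormedField 𝕜] (p : 𝕜[X])
    (n : ℕ) :
    iteratedDeriv n (fun t => p.eval t) = fun t => (derivative^[n] p).eval t := by
  induction n generalizing p with
  | zero => rfl
  | succ n ih =>
    have hd : _root_.deriv (fun t => p.eval t) = fun t => (derivative p).eval t := by
      funext t
      exact p.deriv
    rw [iteratedDeriv_succ', hd, ih, Function.iterate_succ_apply]

theorem kcomp_univ_eq_one_iff {V : Type*} [Fintype V] [DecidableEq V] (A : Finset (Sym2 V)) :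
    kcomp univ A = 1 ↔ ConnectedSum.IsConnGraph univ A := by
  rw [kcomp, coe_univ, Nat.card_congr (induceUnivIso _).connectedComponentEquiv,
    Nat.card_eq_one_iff_unique]
  constructor
  · rintro ⟨hsub, ⟨c⟩⟩
    obtain ⟨a, -⟩ := c.exists_rep
    exact ⟨fun e _ => mem_sym2_iff.2 fun _ _ => mem_univ _, ⟨a, mem_univ _⟩,
      fun a _ b _ => ConnectedComponent.eq.1 (Subsingleton.elim _ _)⟩
  · rintro ⟨-, ⟨a, -⟩, h⟩
    exact ⟨⟨ConnectedComponent.ind₂ fun a b =>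
      ConnectedComponent.eq.2 (h a (mem_univ _) b (mem_univ _))⟩,
      ⟨connectedComponentMk _ a⟩⟩

/-- For `-1 ≤ v_e ≤ 0`, the generalized connected sum
`C_G(v,λ) = Σ_{A ⊆ E : (V,A) connected} λ^{|A|-|V|+1} ∏_{e ∈ A} v_e`
satisfies `(-1)^{ℓ+|V|-1} C_G(v,·)^{(ℓ)}(λ) ≥ 0` for `0 ≤ λ ≤ 1` and all `ℓ ≥ 0`. -/
theorem stmt18 {V : Type*} [Fintype V] [DecidableEq V] [Nonempty V]
    (G : SimpleGraph V) [DecidableRel G.Adj] (v : Sym2 V → ℝ)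
    (hv : ∀ e ∈ G.edgeFinset, -1 ≤ v e ∧ v e ≤ 0)
    (F : ℝ → ℝ)
    (hF : ∀ lam : ℝ, F lam
      = ∑ A ∈ G.edgeFinset.powerset.filter
            (fun A => kcomp (Finset.univ : Finset V) A = 1),
          lam ^ (A.card + 1 - Fintype.card V) * ∏ e ∈ A, v e)
    (ℓ : ℕ) (lam : ℝ) (h0 : 0 ≤ lam) (h1 : lam ≤ 1) :
    0 ≤ (-1 : ℝ) ^ (ℓ + Fintype.card V - 1) * iteratedDeriv ℓ F lam := by
  have hF' : F = fun t => (ConnectedSum.connPoly v univ G.edgeFinset).eval t := by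
    classical
    funext t
    rw [hF, ConnectedSum.connPoly, eval_finsetSum]
    refine sum_congr (filter_congr fun A _ => kcomp_univ_eq_one_iff A) fun A _ => ?_
    rw [ConnectedSum.connTerm, eval_monomial, card_univ, mul_comm]
  have hcard : ℓ + Fintype.card V - 1 = ℓ + ((univ : Finset V).card - 1) := by
    have := Fintype.card_pos (α := V)
    rw [card_univ]
    omega
  rw [hF', Polynomial.iteratedDeriv_eval, hcard]
  exact ConnectedSum.altDerivSign_connPoly hv univ_nonempty ℓ lam ⟨h0, h1⟩
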